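/- arXiv:1807.01549 — 3 statements merged into one kernel-verified Lean document; each statement's English description precedes it below -/
import Mathlib

section
/- Let X be a topological space. Then X^ω is countably compact if and only if for every countable family γ of injective discrete sequences on X, ⋂_{ζ∈γ} u(ζ) ≠ ∅, where u(ζ) is the set of free ultrafilters p such that ζ has a p-limit in X. -/
open Set Filter Topology Function

/-- A free ultrafilter on ℕ: one containing no singleton. -/
def FreeUF (p : Ultrafilter ℕ) : Prop := ∀ n : ℕ, ({n} : Set ℕ) ∉ p

/-- `l` is the `p`-limit of the sequence `x`. -/
def PLim {X : Type*} [TopologicalSpace X] (p : Ultrafilter ℕ) (x : ℕ → X) (l : X) : Prop :=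
  Filter.Tendsto x (p : Filter ℕ) (nhds l)

/-- A βω-space: the closure of any countably infinite discrete subset with compact closure
is homeomorphic to βℕ. -/
def BetaOmegaSpace (X : Type*) [TopologicalSpace X] : Prop :=
  ∀ M : Set X, M.Countable → M.Infinite → DiscreteTopology M → IsCompact (closure M) →
    Nonempty (closure M ≃ₜ StoneCech ℕ)

/-- Keisler–Rudin (Rudin–Keisler) order on ultrafilters on ℕ. -/
def RKle (p q : Ultrafilter ℕ) : Prop := ∃ f : ℕ → ℕ, Ultrafilter.map f q = p

/-- A homogeneous space. -/
def Homogeneous (X : Type*) [TopologicalSpace X] : Prop :=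
  ∀ x y : X, ∃ h : X ≃ₜ X, h x = y

/-- Countable compactness: every countable open cover has a finite subcover. -/
def CountablyCompact (X : Type*) [TopologicalSpace X] : Prop :=
  ∀ U : ℕ → Set X, (∀ n, IsOpen (U n)) → (⋃ n, U n) = Set.univ →
    ∃ t : Finset ℕ, (⋃ n ∈ t, U n) = Set.univ

/-!
Countable compactness of `X^ω` says that every sequence in `X^ω` has a cluster point, that is, a
free ultrafilter along which all of its coordinate sequences converge; this gives one direction at
once. Conversely, given a sequence in `X^ω`, shrink the index set coordinate by coordinate so that
the `k`-th coordinate sequence either converges or is injective with discrete range (a dichotomy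
valid in T1 spaces), and pass to a diagonal subsequence. Convergent coordinates converge along
every free ultrafilter; the discrete ones, with finitely many terms altered to keep them injective,
form a countable family of injective discrete sequences, and the hypothesis gives one free
ultrafilter along which all of them converge.
-/

theorem countablyCompact_iff_forall_mapClusterPt {Y : Type*} [TopologicalSpace Y] :
    CountablyCompact Y ↔ ∀ u : ℕ → Y, ∃ y, MapClusterPt y atTop u := by
  simp only [CountablyCompact, ← univ_subset_iff, ← isCountablyCompact_iff_countable_open_cover,
    isCountablyCompact_iff_seq_clusterPt, mem_univ, eventually_true, true_and, true_implies]

theorem freeUF_iff_le_cofinite (p : Ultrafilter ℕ) : FreeUF p ↔ (p : Filter ℕ) ≤ cofinite := by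
  refine ⟨fun hp => ?_, fun hp n hn => ?_⟩
  · rcases p.le_cofinite_or_eq_pure with hle | ⟨a, rfl⟩
    · exact hle
    · exact absurd (mem_pure.2 rfl) (hp a)
  · exact p.compl_mem_iff_notMem.1 (hp (finite_singleton n).compl_mem_cofinite) hn

/-- Odd indices `2n + 1` form a common diagonal; for `n < k` they are replaced by the distinct even
indices `2 (k + n)`, so that every index is `≥ k` while the map stays injective. -/
def reserveIndex (k n : ℕ) : ℕ := if n < k then 2 * (k + n) else 2 * n + 1

theorem reserveIndex_injective (k : ℕ) : Injective (reserveIndex k) := by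
  intro n₁ n₂ h
  simp only [reserveIndex] at h
  split_ifs at h <;> omega

theorem le_reserveIndex (k n : ℕ) : k ≤ reserveIndex k n := by
  unfold reserveIndex
  split_ifs <;> omega

theorem reserveIndex_of_le {k n : ℕ} (h : k ≤ n) : reserveIndex k n = 2 * n + 1 :=
  if_neg (not_lt.2 h)

section

variable {X : Type*} [TopologicalSpace X]

theorem tendsto_cofinite_inf_principal_iff {y : ℕ → X} {M : Set ℕ} {x : X} :
    Tendsto y (cofinite ⊓ 𝓟 M) (𝓝 x) ↔ ∀ U ∈ 𝓝 x, {n ∈ M | y n ∉ U}.Finite := by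
  simp only [tendsto_def, mem_inf_principal, mem_cofinite, compl_ofPred, Classical.not_imp,
    mem_preimage]

theorem injective_and_discreteTopology_range_of_notMem_nhds [T1Space X] {z : ℕ → X}
    {U : ℕ → Set X} (hU : ∀ i, U i ∈ 𝓝 (z i)) (hz : ∀ i j, i < j → z j ∉ U i) :
    Injective z ∧ DiscreteTopology (range z) := by
  have hinj : Injective z := by
    intro i j hij
    by_contra hne
    rcases Nat.lt_or_gt_of_ne hne with h | h
    · exact hz i j h (hij ▸ mem_of_mem_nhds (hU i))
    · exact hz j i h (hij ▸ mem_of_mem_nhds (hU j))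
  refine ⟨hinj, discreteTopology_subtype_iff.2 ?_⟩
  rintro _ ⟨i, rfl⟩
  have hV : U i ∩ (z '' Iio i)ᶜ ∈ 𝓝 (z i) :=
    inter_mem (hU i) (((finite_Iio i).image z).isClosed.compl_mem_nhds
      fun ⟨j, hj, hji⟩ => (hinj hji).not_lt hj)
  rw [inf_principal_eq_bot, mem_nhdsWithin_iff_exists_mem_nhds_inter]
  refine ⟨_, hV, ?_⟩
  rintro _ ⟨⟨hUi, hlt⟩, hne⟩ ⟨j, rfl⟩
  rcases lt_trichotomy j i with h | rfl | h
  · exact hlt ⟨j, h, rfl⟩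
  · exact hne rfl
  · exact hz i j h hUi

theorem exists_infinite_subset_tendsto_or_discrete [T1Space X] (y : ℕ → X) {M : Set ℕ}
    (hM : M.Infinite) :
    ∃ M' ⊆ M, M'.Infinite ∧ ((∃ x, Tendsto y (cofinite ⊓ 𝓟 M') (𝓝 x)) ∨
      (InjOn y M' ∧ DiscreteTopology (y '' M'))) := by
  by_cases hconv : ∃ M' ⊆ M, M'.Infinite ∧ ∃ x, Tendsto y (cofinite ⊓ 𝓟 M') (𝓝 x)
  · obtain ⟨M', hM'M, hM', hx⟩ := hconv
    exact ⟨M', hM'M, hM', Or.inl hx⟩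
  push Not at hconv
  -- `y` converges to `y a` along no infinite `T`, so some neighbourhood of `y a` is missed by
  -- infinitely many terms; recursing into those gives points each avoiding the earlier `U`s.
  have step : ∀ T : {T : Set ℕ // T ⊆ M ∧ T.Infinite},
      ∃ a ∈ T.1, ∃ U ∈ 𝓝 (y a), {n ∈ T.1 | y n ∉ U}.Infinite := by
    rintro ⟨T, hTM, hT⟩
    obtain ⟨a, ha⟩ := hT.nonempty
    have := hconv T hTM hT (y a)
    simp only [tendsto_cofinite_inf_principal_iff, not_forall, exists_prop] at this
    exact ⟨a, ha, this⟩
  choose a ha U hU hinf using step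
  let T : ℕ → {T : Set ℕ // T ⊆ M ∧ T.Infinite} := fun i => Nat.rec ⟨M, subset_rfl, hM⟩
    (fun _ T => ⟨{n ∈ T.1 | y n ∉ U T}, (sep_subset _ _).trans T.2.1, hinf T⟩) i
  have hT : Antitone fun i => (T i).1 := antitone_nat_of_succ_le fun i => sep_subset _ _
  obtain ⟨hinj, hdisc⟩ := injective_and_discreteTopology_range_of_notMem_nhds
    (z := fun i => y (a (T i))) (fun i => hU (T i))
    fun i j hij => (hT hij (ha (T j))).2
  refine ⟨range fun i => a (T i), ?_, infinite_range_of_injective hinj.of_comp,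
    Or.inr ⟨?_, ?_⟩⟩
  · rintro _ ⟨i, rfl⟩
    exact (T i).2.1 (ha (T i))
  · rintro _ ⟨i, rfl⟩ _ ⟨j, rfl⟩ hij
    rw [hinj hij]
  · rwa [← range_comp]

theorem exists_antitone_infinite_tendsto_or_discrete [T1Space X] (y : ℕ → ℕ → X) :
    ∃ C : ℕ → Set ℕ, Antitone C ∧ (∀ k, (C k).Infinite) ∧ ∀ k,
      (∃ x, Tendsto (y k) (cofinite ⊓ 𝓟 (C k)) (𝓝 x)) ∨
        (InjOn (y k) (C k) ∧ DiscreteTopology (y k '' C k)) := by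
  choose F hFM hF hFy using fun (k : ℕ) (M : {M : Set ℕ // M.Infinite}) =>
    exists_infinite_subset_tendsto_or_discrete (y k) M.2
  let E : ℕ → {M : Set ℕ // M.Infinite} :=
    fun k => Nat.rec ⟨univ, infinite_univ⟩ (fun k M => ⟨F k M, hF k M⟩) k
  exact ⟨fun k => F k (E k), antitone_nat_of_succ_le fun k => hFM (k + 1) (E (k + 1)),
    fun k => hF k (E k), fun k => hFy k (E k)⟩

theorem exists_freeUF_forall_plim_of_forall_mapClusterPt
    (h : ∀ u : ℕ → ℕ → X, ∃ f, MapClusterPt f atTop u) {γ : Set (ℕ → X)} (hγ : γ.Countable) :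
    ∃ p : Ultrafilter ℕ, FreeUF p ∧ ∀ ζ ∈ γ, ∃ x, PLim p ζ x := by
  obtain rfl | hne := γ.eq_empty_or_nonempty
  · exact ⟨hyperfilter ℕ, (freeUF_iff_le_cofinite _).2 hyperfilter_le_cofinite, by simp⟩
  obtain ⟨e, rfl⟩ := hγ.exists_eq_range hne
  obtain ⟨f, hf⟩ := h fun n k => e k n
  obtain ⟨p, hp, hpf⟩ := mapClusterPt_iff_ultrafilter.1 hf
  refine ⟨p, (freeUF_iff_le_cofinite p).2 (Nat.cofinite_eq_atTop ▸ hp), ?_⟩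
  rintro _ ⟨k, rfl⟩
  exact ⟨f k, tendsto_pi_nhds.1 hpf k⟩

theorem exists_mapClusterPt_of_forall_exists_freeUF_plim [T1Space X]
    (h : ∀ γ : Set (ℕ → X), γ.Countable →
        (∀ ζ ∈ γ, Injective ζ ∧ DiscreteTopology (range ζ)) →
        ∃ p : Ultrafilter ℕ, FreeUF p ∧ ∀ ζ ∈ γ, ∃ x, PLim p ζ x)
    (u : ℕ → ℕ → X) : ∃ f, MapClusterPt f atTop u := by
  obtain ⟨C, hCanti, hCinf, hC⟩ :=
    exists_antitone_infinite_tendsto_or_discrete fun k n => u n k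
  obtain ⟨a, ha, haC⟩ := extraction_forall_of_frequently fun k =>
    Nat.frequently_atTop_iff_infinite.2 (hCinf k)
  let ι : ℕ → ℕ → ℕ := fun k n => a (reserveIndex k n)
  have hιC : ∀ k n, ι k n ∈ C k := fun k n => hCanti (le_reserveIndex k n) (haC _)
  have hιinj : ∀ k, Injective (ι k) := fun k => ha.injective.comp (reserveIndex_injective k)
  have hι0 : ∀ k n, k ≤ n → ι k n = ι 0 n := fun k n hkn =>
    congrArg a ((reserveIndex_of_le hkn).trans (reserveIndex_of_le n.zero_le).symm)
  let D := {k | InjOn (fun n => u n k) (C k) ∧ DiscreteTopology ((fun n => u n k) '' C k)}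
  obtain ⟨p, hp, hlim⟩ := h ((fun k n => u (ι k n) k) '' D) (D.to_countable.image _) <| by
    rintro _ ⟨k, ⟨hinj, hdisc⟩, rfl⟩
    exact ⟨fun n₁ n₂ heq => hιinj k (hinj (hιC k n₁) (hιC k n₂) heq),
      hdisc.of_subset (range_subset_iff.2 fun n => mem_image_of_mem _ (hιC k n))⟩
  rw [freeUF_iff_le_cofinite] at hp
  have hlim' : ∀ k, ∃ x, Tendsto (fun n => u (ι k n) k) p (𝓝 x) := fun k => by
    rcases hC k with ⟨x, hx⟩ | hk
    · exact ⟨x, hx.comp (tendsto_inf.2 ⟨(hιinj k).tendsto_cofinite.comp hp,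
        tendsto_principal.2 (Eventually.of_forall (hιC k))⟩)⟩
    · exact hlim _ ⟨k, hk, rfl⟩
  choose f hf using hlim'
  have hdiag : Tendsto (fun n => u (ι 0 n)) p (𝓝 f) := tendsto_pi_nhds.2 fun k =>
    (hf k).congr' <| ((Nat.cofinite_eq_atTop ▸ eventually_ge_atTop k).filter_mono hp).mono
      fun n hkn => congrArg (u · k) (hι0 k n hkn)
  exact ⟨f, hdiag.mapClusterPt.of_comp
    (Nat.cofinite_eq_atTop ▸ (hιinj 0).tendsto_cofinite.comp hp)⟩

end

/-- `X^ω` is countably compact iff for every countable family `γ` of discrete exact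
sequences on `X` there is a common free ultrafilter `p` for which each member has a `p`-limit. -/
theorem stmt_10 {X : Type*} [TopologicalSpace X] [T1Space X] :
    CountablyCompact (ℕ → X) ↔
      ∀ γ : Set (ℕ → X), γ.Countable →
        (∀ ζ ∈ γ, Function.Injective ζ ∧ DiscreteTopology ↥(Set.range ζ)) →
        ∃ p : Ultrafilter ℕ, FreeUF p ∧ ∀ ζ ∈ γ, ∃ x : X, PLim p ζ x := by
  rw [countablyCompact_iff_forall_mapClusterPt]
  exact ⟨fun h γ hγ _ => exists_freeUF_forall_plim_of_forall_mapClusterPt h hγ,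
    exists_mapClusterPt_of_forall_exists_freeUF_plim⟩
end

section
/- If X is a sequentially p-compact space for a free ultrafilter p on ℕ, then X^ω is sequentially p-compact. -/
open Set Filter Topology Function

/-- Sequential `p`-compactness: every infinite set has an infinite subset all of whose
injective sequences have `p`-limits. -/
def SeqPCompact (p : Ultrafilter ℕ) (X : Type*) [TopologicalSpace X] : Prop :=
  ∀ M : Set X, M.Infinite → ∃ L : Set X, L ⊆ M ∧ L.Infinite ∧
    ∀ x : ℕ → X, Function.Injective x → (∀ n, x n ∈ L) → ∃ l : X, PLim p x l

/-!
Enumerate an infinite `M ⊆ X^ω` injectively as `f`. For each coordinate `n`, every infinite set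
of indices has an infinite subset on which `j ↦ f j n` is either constant or injective with values
in a set all of whose injective sequences have `p`-limits; in both cases every injective
reindexing that lands there `p`-often converges along `p`. A diagonal subsequence `f ∘ k` whose
`n`-th term onwards lies in the `n`-th such set gives the required `L`: an injective sequence in
`L` is `p`-eventually indexed beyond `n` (as `p` is free), so each of its coordinates has a
`p`-limit, and hence so does the sequence in the product topology.
-/

lemma FreeUF.le_cofinite {p : Ultrafilter ℕ} (hp : FreeUF p) : (p : Filter ℕ) ≤ cofinite := by
  rcases p.le_cofinite_or_eq_pure with h | ⟨a, rfl⟩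
  · exact h
  · exact (hp a (Ultrafilter.mem_pure.2 rfl)).elim

lemma Set.Infinite.exists_subset_infinite_sdiff {α : Type*} {s : Set α} (hs : s.Infinite) :
    ∃ t ⊆ s, t.Infinite ∧ (s \ t).Infinite := by
  set e := hs.natEmbedding
  have he : ∀ {a b}, (e a : α) = e b → a = b := fun h => e.injective (Subtype.ext h)
  refine ⟨range fun i => (e (2 * i) : α), range_subset_iff.2 fun i => (e _).2,
    infinite_range_of_injective fun a b h => by have := he h; omega, ?_⟩
  refine (infinite_range_of_injective (f := fun i => (e (2 * i + 1) : α))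
    fun a b h => by have := he h; omega).mono ?_
  rintro _ ⟨i, rfl⟩
  exact ⟨(e _).2, fun ⟨j, hj⟩ => by have := he hj; omega⟩

lemma Ultrafilter.exists_mem_subset_infinite_sdiff {α : Type*} {p : Ultrafilter α}
    (hp : (p : Filter α) ≤ cofinite) {S : Set α} (hS : S ∈ p) :
    ∃ T ⊆ S, T ∈ p ∧ (S \ T).Infinite := by
  have hSinf : S.Infinite :=
    frequently_cofinite_mem_iff_infinite.1 ((Eventually.frequently hS).filter_mono hp)
  obtain ⟨t, hts, ht, hst⟩ := hSinf.exists_subset_infinite_sdiff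
  by_cases htp : t ∈ p
  · exact ⟨t, hts, htp, hst⟩
  · exact ⟨S \ t, sdiff_subset, inter_mem hS (Ultrafilter.compl_mem_iff_notMem.2 htp),
      by rwa [sdiff_sdiff_cancel_left hts]⟩

lemma exists_injective_forall_mem_eqOn_id {T S : Set ℕ} (hTS : T ⊆ S)
    (hST : (S \ T).Infinite) : ∃ σ : ℕ → ℕ, Injective σ ∧ (∀ m, σ m ∈ S) ∧ EqOn σ id T := by
  classical
  set e := hST.natEmbedding
  refine ⟨fun m => if m ∈ T then m else e m, fun a b hab => ?_, fun m => ?_,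
    fun m hm => if_pos hm⟩
  · by_cases ha : a ∈ T <;> by_cases hb : b ∈ T <;>
      simp only [ha, hb, if_true, if_false] at hab
    · exact hab
    · exact ((e b).2.2 (hab ▸ ha)).elim
    · exact ((e a).2.2 (hab ▸ hb)).elim
    · exact e.injective (Subtype.ext hab)
  · by_cases hm : m ∈ T
    · simpa [hm] using hTS hm
    · simpa [hm] using (e m).2.1

section

variable {X : Type*} [TopologicalSpace X] {p : Ultrafilter ℕ}

def HasInjPLimits (p : Ultrafilter ℕ) (L : Set X) : Prop :=
  ∀ x : ℕ → X, Injective x → (∀ n, x n ∈ L) → ∃ l : X, PLim p x l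

lemma HasInjPLimits.exists_pLim {L : Set X} (hL : HasInjPLimits p L)
    (hp : (p : Filter ℕ) ≤ cofinite) {y : ℕ → X} {S : Set ℕ} (hS : S ∈ p) (hinj : InjOn y S)
    (hmaps : MapsTo y S L) : ∃ l, PLim p y l := by
  obtain ⟨T, hTS, hT, hST⟩ := Ultrafilter.exists_mem_subset_infinite_sdiff hp hS
  -- Off the `p`-large `T`, reroute `y` through its values on the infinite `S \ T`.
  obtain ⟨σ, hσ, hσS, hσT⟩ := exists_injective_forall_mem_eqOn_id hTS hST
  obtain ⟨l, hl⟩ := hL (y ∘ σ) (injOn_univ.1 (hinj.comp hσ.injOn fun m _ => hσS m))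
    fun m => hmaps (hσS m)
  exact ⟨l, hl.congr' (eventuallyEq_of_mem hT fun m hm => congrArg y (hσT hm))⟩

def PConvergentOn (p : Ultrafilter ℕ) (g : ℕ → X) (B : Set ℕ) : Prop :=
  ∀ i : ℕ → ℕ, Injective i → i ⁻¹' B ∈ p → ∃ l, PLim p (g ∘ i) l

lemma PConvergentOn.mono {g : ℕ → X} {B B' : Set ℕ} (h : PConvergentOn p g B)
    (hB : B' ⊆ B) : PConvergentOn p g B' :=
  fun i hi hiB => h i hi (mem_of_superset hiB (preimage_mono hB))

lemma pConvergentOn_of_eqOn_const {g : ℕ → X} {B : Set ℕ} {v : X}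
    (h : EqOn g (fun _ => v) B) : PConvergentOn p g B := fun _ _ hiB =>
  ⟨v, tendsto_const_nhds.congr' (eventuallyEq_of_mem hiB fun _ hm => (h hm).symm)⟩

lemma HasInjPLimits.pConvergentOn {L : Set X} (hL : HasInjPLimits p L)
    (hp : (p : Filter ℕ) ≤ cofinite) {g : ℕ → X} {B : Set ℕ} (hinj : InjOn g B)
    (hmaps : MapsTo g B L) : PConvergentOn p g B :=
  fun i hi hiB => hL.exists_pLim hp hiB (hinj.comp hi.injOn (mapsTo_preimage i B))
    (hmaps.comp (mapsTo_preimage i B))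

lemma SeqPCompact.exists_pConvergentOn (hX : SeqPCompact p X)
    (hp : (p : Filter ℕ) ≤ cofinite) (g : ℕ → X) {A : Set ℕ} (hA : A.Infinite) :
    ∃ B ⊆ A, B.Infinite ∧ PConvergentOn p g B := by
  by_cases hfib : ∃ v, (A ∩ g ⁻¹' {v}).Infinite
  · obtain ⟨v, hv⟩ := hfib
    exact ⟨_, inter_subset_left, hv, pConvergentOn_of_eqOn_const fun _ hj => hj.2⟩
  simp only [not_exists, not_infinite] at hfib
  have himg : (g '' A).Infinite := fun hfin =>
    hA ((hfin.biUnion fun v _ => hfib v).subset fun j hj =>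
      mem_biUnion (mem_image_of_mem g hj) ⟨hj, rfl⟩)
  obtain ⟨L, hLA, hLinf, hL⟩ : ∃ L ⊆ g '' A, L.Infinite ∧ HasInjPLimits p L :=
    hX _ himg
  obtain ⟨B, hB, hbij⟩ := exists_subset_bijOn (A ∩ g ⁻¹' L) g
  refine ⟨B, hB.trans inter_subset_left, Infinite.of_image g ?_,
    hL.pConvergentOn hp hbij.injOn fun j hj => (hB hj).2⟩
  rwa [hbij.image_eq, image_inter_preimage, inter_eq_right.2 hLA]

end

lemma exists_antitone_infinite {P : ℕ → Set ℕ → Prop}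
    (h : ∀ n A, A.Infinite → ∃ B ⊆ A, B.Infinite ∧ P n B) :
    ∃ G : ℕ → Set ℕ, Antitone G ∧ ∀ n, (G n).Infinite ∧ P n (G n) := by
  choose sub hsub hinf hP using h
  let G : ℕ → {A : Set ℕ // A.Infinite} := fun n =>
    Nat.rec ⟨univ, infinite_univ⟩ (fun m A => ⟨sub m A A.2, hinf m A A.2⟩) n
  have hG : Antitone fun n => (G n).1 := antitone_nat_of_succ_le fun n => hsub n _ _
  exact ⟨fun n => (G (n + 1)).1, fun a b hab => hG (Nat.succ_le_succ hab),
    fun n => ⟨(G (n + 1)).2, hP n _ _⟩⟩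

lemma exists_strictMono_image_Ici_subset {G : ℕ → Set ℕ} (hG : Antitone G)
    (hinf : ∀ n, (G n).Infinite) : ∃ k : ℕ → ℕ, StrictMono k ∧ ∀ n, k '' Ici n ⊆ G n := by
  choose next hmem hgt using fun n a => (hinf n).exists_gt a
  let k : ℕ → ℕ := fun n => Nat.rec (next 0 0) (fun m km => next (m + 1) km) n
  have hk : ∀ n, k n ∈ G n := by
    rintro (_ | n)
    exacts [hmem 0 0, hmem _ _]
  refine ⟨k, strictMono_nat_of_lt_succ fun n => hgt _ _, ?_⟩
  rintro n _ ⟨j, hj, rfl⟩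
  exact hG hj (hk j)

lemma exists_strictMono_forall_image_Ici {P : ℕ → Set ℕ → Prop}
    (hmono : ∀ n B B', B' ⊆ B → P n B → P n B')
    (h : ∀ n A, A.Infinite → ∃ B ⊆ A, B.Infinite ∧ P n B) :
    ∃ k : ℕ → ℕ, StrictMono k ∧ ∀ n, P n (k '' Ici n) := by
  obtain ⟨G, hG, hGP⟩ := exists_antitone_infinite h
  obtain ⟨k, hk, hkG⟩ := exists_strictMono_image_Ici_subset hG fun n => (hGP n).1
  exact ⟨k, hk, fun n => hmono n _ _ (hkG n) (hGP n).2⟩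

/-- Sequential `p`-compactness is preserved by countable powers. -/
theorem stmt_12 {X : Type*} [TopologicalSpace X] (p : Ultrafilter ℕ) (hfree : FreeUF p)
    (hX : SeqPCompact p X) : SeqPCompact p (ℕ → X) := by
  have hp := hfree.le_cofinite
  intro M hM
  set f : ℕ → ℕ → X := fun j => (hM.natEmbedding _ j : ℕ → X)
  have hf : Injective f := fun a b h => (hM.natEmbedding _).injective (Subtype.ext h)
  obtain ⟨k, hk, hkconv⟩ := exists_strictMono_forall_image_Ici
    (P := fun n => PConvergentOn p fun j => f j n) (fun _ _ _ hB h => h.mono hB)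
    fun _ _ hA => hX.exists_pConvergentOn hp _ hA
  refine ⟨range (f ∘ k), range_subset_iff.2 fun j => (hM.natEmbedding _ _).2,
    infinite_range_of_injective (hf.comp hk.injective), fun x hx hxL => ?_⟩
  choose idx hidx using hxL
  have hidx_inj : Injective idx := fun a b h => hx (by rw [← hidx a, ← hidx b, h])
  have hcoord : ∀ n, ∃ l, PLim p (fun m => x m n) l := fun n => by
    have hfar : idx ⁻¹' Ici n ∈ p :=
      (hp.trans Nat.cofinite_eq_atTop.le) (hidx_inj.nat_tendsto_atTop (Ici_mem_atTop n))
    obtain ⟨l, hl⟩ := hkconv n (k ∘ idx) (hk.injective.comp hidx_inj)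
      (mem_of_superset hfar fun m hm => mem_image_of_mem k hm)
    have hxn : (fun j => f j n) ∘ k ∘ idx = fun m => x m n :=
      funext fun m => congrFun (hidx m) n
    exact ⟨l, hxn ▸ hl⟩
  choose l hl using hcoord
  exact ⟨l, tendsto_pi_nhds.2 hl⟩
end

section
/- Let X be a countably compact, maximally homogeneous, extremally disconnected space. Then X^ω is countably compact. -/
open Set Filter Topology Function

/-- A maximally homogeneous space: homogeneous and every self-homeomorphism of βX maps
(points of) X into X. -/
def MaximallyHomogeneous (X : Type*) [TopologicalSpace X] : Prop :=
  Homogeneous X ∧ ∀ (g : StoneCech X ≃ₜ StoneCech X) (x : X),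
    ∃ y : X, g (stoneCechUnit x) = stoneCechUnit y

/-!
Split a strongly discrete sequence of `X` into its even and odd halves; by countable compactness
the even half converges along some free ultrafilter `p`. Let `e` be a sequence converging to `x`
along `p` and `y` a strongly discrete sequence whose disjoint open neighbourhoods miss those of
`e`. Homeomorphisms `h k` of `X` with `h k (e k) = y k`, glued on these neighbourhoods, form an
involution of a dense open subset of `X`; as `X` is extremally disconnected it extends to a
homeomorphism `Ψ` of `βX`. Then `y` converges along `p` to `Ψ x`, which lies in `X` by maximal
homogeneity. The closure of the even neighbourhoods is clopen, so one of the two halves can serve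
as `e` for any strongly discrete `y`. A diagonal argument makes each coordinate of a subsequence of
a sequence in `X^ω` constant or strongly discrete, so the subsequence has a `p`-limit.
-/

section CountablyCompact

variable {X : Type*} [TopologicalSpace X]

theorem CountablyCompact.exists_mapClusterPt (hX : CountablyCompact X) (u : ℕ → X) :
    ∃ x, MapClusterPt x atTop u := by
  by_contra! h
  have hcover : ⋃ n, (closure (u '' Ici n))ᶜ = univ := by
    refine eq_univ_of_forall fun x => ?_
    by_contra! hx
    simp only [mem_iUnion, mem_compl_iff, not_exists, not_not] at hx
    exact h x ((atTop_basis.map u).clusterPt_iff_forall_mem_closure.2 fun n _ => hx n)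
  obtain ⟨t, ht⟩ := hX _ (fun n => isClosed_closure.isOpen_compl) hcover
  obtain ⟨N, hN⟩ := t.exists_nat_subset_range
  obtain ⟨n, hn, hun⟩ := mem_iUnion₂.1 (ht ▸ mem_univ (u N))
  exact hun (subset_closure ⟨N, (Finset.mem_range.1 (hN hn)).le, rfl⟩)

theorem countablyCompact_of_forall_exists_mapClusterPt
    (h : ∀ u : ℕ → X, ∃ x, MapClusterPt x atTop u) : CountablyCompact X := by
  intro U hU hcover
  by_contra! hfin
  choose u hu using fun n => (ne_univ_iff_exists_notMem _).1 (hfin (Finset.range (n + 1)))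
  obtain ⟨x, hx⟩ := h u
  obtain ⟨i, hi⟩ := mem_iUnion.1 (hcover ▸ mem_univ x)
  obtain ⟨n, hin, hn⟩ :=
    frequently_atTop.1 (mapClusterPt_iff_frequently.1 hx _ ((hU i).mem_nhds hi)) i
  exact hu n (mem_iUnion₂.2 ⟨i, Finset.mem_range.2 (Nat.lt_succ_of_le hin), hn⟩)

end CountablyCompact

section ExtremallyDisconnected

variable {X : Type*} [TopologicalSpace X] [ExtremallyDisconnected X]

theorem ExtremallyDisconnected.exists_tendsto_nhdsWithin {Y : Type*} [TopologicalSpace Y]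
    [CompactSpace Y] [T2Space Y] {W : Set X} (hW : IsOpen W) {f : X → Y} (hf : ContinuousOn f W)
    {a : X} (ha : a ∈ closure W) : ∃ y, Tendsto f (𝓝[W] a) (𝓝 y) := by
  have : (𝓝[W] a).NeBot := mem_closure_iff_nhdsWithin_neBot.1 ha
  obtain ⟨y, hy⟩ := exists_clusterPt_of_compactSpace (map f (𝓝[W] a))
  refine ⟨y, tendsto_nhds_of_unique_mapClusterPt fun z hz => by_contra fun hzy => ?_⟩
  obtain ⟨U, V, hU, hV, hzU, hyV, hUV⟩ := t2_separation hzy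
  have mem_closure_of_mapClusterPt : ∀ {w : Y} {O : Set Y}, IsOpen O → w ∈ O →
      MapClusterPt w (𝓝[W] a) f → a ∈ closure (W ∩ f ⁻¹' O) := fun hO hw h =>
    mem_closure_iff_frequently.2 <| (frequently_nhdsWithin_iff.1
      (mapClusterPt_iff_frequently.1 h _ (hO.mem_nhds hw))).mono fun _ hx => ⟨hx.2, hx.1⟩
  exact disjoint_left.1 (ExtremallyDisconnected.disjoint_closure_of_disjoint_isOpen
      ((hUV.preimage f).mono inter_subset_right inter_subset_right)
      (hf.isOpen_inter_preimage hW hU) (hf.isOpen_inter_preimage hW hV))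
    (mem_closure_of_mapClusterPt hU hzU hz) (mem_closure_of_mapClusterPt hV hyV hy)

theorem exists_homeomorph_stoneCech_of_involutive_on {W : Set X} (hWo : IsOpen W)
    (hWd : Dense W) {σ : X → X} (hσ : ContinuousOn σ W) (hσW : MapsTo σ W W)
    (hσσ : ∀ x ∈ W, σ (σ x) = x) :
    ∃ Ψ : StoneCech X ≃ₜ StoneCech X, ∀ x ∈ W, Ψ (stoneCechUnit x) = stoneCechUnit (σ x) := by
  have hf : ContinuousOn (stoneCechUnit ∘ σ) W := continuous_stoneCechUnit.comp_continuousOn hσ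
  have hψ : Continuous (extendFrom W (stoneCechUnit ∘ σ)) :=
    continuousOn_univ.1 <| continuousOn_extendFrom (by rw [hWd.closure_eq]) fun a _ =>
      ExtremallyDisconnected.exists_tendsto_nhdsWithin hWo hf (hWd.closure_eq ▸ mem_univ a)
  set Ψ := stoneCechExtend hψ
  have hΨc : Continuous Ψ := continuous_stoneCechExtend hψ
  have hΨ : ∀ x ∈ W, Ψ (stoneCechUnit x) = stoneCechUnit (σ x) := fun x hx =>
    (stoneCechExtend_stoneCechUnit hψ x).trans (extendFrom_extends hf x hx)
  have hinv : Involutive Ψ := congrFun <| stoneCech_hom_ext (hΨc.comp hΨc) continuous_id <|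
    (hΨc.comp hΨc).comp continuous_stoneCechUnit |>.ext_on hWd continuous_stoneCechUnit
      fun x hx => by simp [hΨ x hx, hΨ _ (hσW hx), hσσ x hx]
  exact ⟨{ toEquiv := hinv.toPerm Ψ, continuous_toFun := hΨc, continuous_invFun := hΨc }, hΨ⟩

end ExtremallyDisconnected

section SwapMap

variable {X ι : Type*} [TopologicalSpace X] {M N : ι → Set X} {h : ι → X ≃ₜ X} {x : X} {i : ι}

open Classical in
noncomputable def swapMap (M N : ι → Set X) (h : ι → X ≃ₜ X) (x : X) : X :=
  if hM : ∃ i, x ∈ M i then h hM.choose x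
  else if hN : ∃ i, x ∈ N i then (h hN.choose).symm x else x

theorem swapMap_of_mem_left (hMd : Pairwise (Disjoint on M)) (hx : x ∈ M i) :
    swapMap M N h x = h i x := by
  have hM : ∃ i, x ∈ M i := ⟨i, hx⟩
  rw [swapMap, dif_pos hM, hMd.eq (not_disjoint_iff.2 ⟨x, hM.choose_spec, hx⟩)]

theorem swapMap_of_mem_right (hNd : Pairwise (Disjoint on N))
    (hMN : ∀ i j, Disjoint (M i) (N j)) (hx : x ∈ N i) :
    swapMap M N h x = (h i).symm x := by
  have hM : ¬∃ i, x ∈ M i := fun ⟨j, hj⟩ => disjoint_left.1 (hMN j i) hj hx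
  have hN : ∃ i, x ∈ N i := ⟨i, hx⟩
  rw [swapMap, dif_neg hM, dif_pos hN, hNd.eq (not_disjoint_iff.2 ⟨x, hN.choose_spec, hx⟩)]

theorem swapMap_of_notMem (hM : ∀ i, x ∉ M i) (hN : ∀ i, x ∉ N i) : swapMap M N h x = x := by
  simp [swapMap, hM, hN]

end SwapMap

theorem exists_homeomorph_stoneCech_of_swap {X ι : Type*} [TopologicalSpace X]
    [ExtremallyDisconnected X] {M N : ι → Set X} (hM : ∀ i, IsOpen (M i)) (hN : ∀ i, IsOpen (N i))
    (hMd : Pairwise (Disjoint on M)) (hNd : Pairwise (Disjoint on N))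
    (hMN : ∀ i j, Disjoint (M i) (N j)) (h : ι → X ≃ₜ X) (hhM : ∀ i, MapsTo (h i) (M i) (N i))
    (hhN : ∀ i, MapsTo (h i).symm (N i) (M i)) :
    ∃ Ψ : StoneCech X ≃ₜ StoneCech X, ∀ i, ∀ x ∈ M i,
      Ψ (stoneCechUnit x) = stoneCechUnit (h i x) := by
  set O := (⋃ i, M i) ∪ ⋃ i, N i
  have hWd : Dense (O ∪ (closure O)ᶜ) := coborder_eq_union_closure_compl (s := O) ▸ dense_coborder
  have hσ : ∀ x ∈ O ∪ (closure O)ᶜ, ContinuousAt (swapMap M N h) x ∧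
      swapMap M N h x ∈ O ∪ (closure O)ᶜ ∧ swapMap M N h (swapMap M N h x) = x := by
    rintro x ((hx | hx) | hx)
    · obtain ⟨i, hx⟩ := mem_iUnion.1 hx
      have hσx := swapMap_of_mem_left (N := N) (h := h) hMd hx
      refine ⟨(h i).continuous.continuousAt.congr (eventuallyEq_of_mem ((hM i).mem_nhds hx)
        fun y hy => (swapMap_of_mem_left hMd hy).symm), ?_, ?_⟩
      · exact hσx ▸ Or.inl (Or.inr (mem_iUnion_of_mem i (hhM i hx)))
      · rw [hσx, swapMap_of_mem_right hNd hMN (hhM i hx), Homeomorph.symm_apply_apply]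
    · obtain ⟨i, hx⟩ := mem_iUnion.1 hx
      have hσx := swapMap_of_mem_right (h := h) hNd hMN hx
      refine ⟨(h i).symm.continuous.continuousAt.congr (eventuallyEq_of_mem ((hN i).mem_nhds hx)
        fun y hy => (swapMap_of_mem_right hNd hMN hy).symm), ?_, ?_⟩
      · exact hσx ▸ Or.inl (Or.inl (mem_iUnion_of_mem i (hhN i hx)))
      · rw [hσx, swapMap_of_mem_left hMd (hhN i hx), Homeomorph.apply_symm_apply]
    · have hfix : ∀ y ∈ (closure O)ᶜ, swapMap M N h y = y := fun y hy =>
        have hyO : y ∉ O := fun hyO => hy (subset_closure hyO)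
        swapMap_of_notMem (fun i hi => hyO (Or.inl (mem_iUnion_of_mem i hi)))
          (fun i hi => hyO (Or.inr (mem_iUnion_of_mem i hi)))
      refine ⟨continuousAt_id.congr (eventuallyEq_of_mem
        (isClosed_closure.isOpen_compl.mem_nhds hx) fun y hy => (hfix y hy).symm), ?_, ?_⟩
      · exact (hfix x hx).symm ▸ Or.inr hx
      · rw [hfix x hx, hfix x hx]
  obtain ⟨Ψ, hΨ⟩ := exists_homeomorph_stoneCech_of_involutive_on
    (((isOpen_iUnion hM).union (isOpen_iUnion hN)).union isClosed_closure.isOpen_compl) hWd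
    (fun x hx => (hσ x hx).1.continuousWithinAt) (fun x hx => (hσ x hx).2.1)
    (fun x hx => (hσ x hx).2.2)
  exact ⟨Ψ, fun i x hx => by
    rw [hΨ x (Or.inl (Or.inl (mem_iUnion_of_mem i hx))), swapMap_of_mem_left hMd hx]⟩

theorem MaximallyHomogeneous.exists_tendsto_of_disjoint {X : Type*} [TopologicalSpace X]
    [CompletelyRegularSpace X] [ExtremallyDisconnected X] (hX : MaximallyHomogeneous X)
    {p : Filter ℕ} {e y : ℕ → X} {x : X} (he : Tendsto e p (𝓝 x)) {C D : ℕ → Set X}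
    (hC : ∀ k, IsOpen (C k)) (hD : ∀ k, IsOpen (D k)) (hCd : Pairwise (Disjoint on C))
    (hDd : Pairwise (Disjoint on D)) (hCD : ∀ k j, Disjoint (C k) (D j))
    (heC : ∀ᶠ k in p, e k ∈ C k) (hyD : ∀ᶠ k in p, y k ∈ D k) : ∃ l, Tendsto y p (𝓝 l) := by
  choose h hh using fun k => hX.1 (e k) (y k)
  set M := fun k => C k ∩ h k ⁻¹' D k
  have hM : ∀ k, IsOpen (M k) := fun k => (hC k).inter ((hD k).preimage (h k).continuous)
  have hMC : ∀ k, M k ⊆ C k := fun k => inter_subset_left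
  have hND : ∀ k, (h k).symm ⁻¹' M k ⊆ D k := fun k x hx => by simpa using hx.2
  obtain ⟨Ψ, hΨ⟩ := exists_homeomorph_stoneCech_of_swap hM
    (fun k => (hM k).preimage (h k).symm.continuous)
    (hCd.mono fun k j hkj => hkj.mono (hMC k) (hMC j))
    (hDd.mono fun k j hkj => hkj.mono (hND k) (hND j)) (fun k j => (hCD k j).mono (hMC k) (hND j))
    h (fun k x hx => by simpa using hx) (fun k x hx => hx)
  have hΨe : ∀ᶠ k in p, Ψ (stoneCechUnit (e k)) = stoneCechUnit (y k) := by
    filter_upwards [heC, hyD] with k hke hky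
    rw [hΨ k (e k) ⟨hke, by rwa [mem_preimage, hh k]⟩, hh k]
  obtain ⟨l, hl⟩ := hX.2 Ψ x
  refine ⟨l, isInducing_stoneCechUnit.tendsto_nhds_iff.2 ?_⟩
  rw [← hl]
  exact ((Ψ.continuous.tendsto _).comp ((continuous_stoneCechUnit.tendsto x).comp he)).congr' hΨe

section StronglyDiscrete

variable {X : Type*} [TopologicalSpace X]

def StronglyDiscreteOn {ι : Type*} (y : ι → X) (A : Set ι) : Prop :=
  ∃ D : ι → Set X, (∀ k, IsOpen (D k)) ∧ Pairwise (Disjoint on D) ∧ ∀ k ∈ A, y k ∈ D k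

theorem StronglyDiscreteOn.comp {ι κ : Type*} {y : ι → X} {A : Set ι}
    (hy : StronglyDiscreteOn y A) {φ : κ → ι} (hφ : Injective φ) :
    StronglyDiscreteOn (y ∘ φ) (φ ⁻¹' A) :=
  let ⟨D, hD, hDd, hyD⟩ := hy
  ⟨D ∘ φ, fun _ => hD _, hDd.comp_of_injective hφ, fun _ hk => hyD _ hk⟩

variable [T2Space X] [ExtremallyDisconnected X]

theorem Set.Infinite.exists_isClopen_mem_infinite_diff {S : Set X} (hS : S.Infinite) :
    ∃ a ∈ S, ∃ K, IsClopen K ∧ a ∈ K ∧ (S \ K).Infinite := by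
  obtain ⟨a, ha, b, hb, hab⟩ := hS.nontrivial
  obtain ⟨U, V, hU, hV, haU, hbV, hUV⟩ := t2_separation hab
  have hUV' := ExtremallyDisconnected.disjoint_closure_of_disjoint_isOpen hUV hU hV
  have hcover : ((S \ closure U) ∪ (S \ closure V)).Infinite := by
    rwa [← sdiff_inter, hUV'.inter_eq, sdiff_empty]
  rcases infinite_union.1 hcover with h | h
  · exact ⟨a, ha, _, ⟨isClosed_closure, ExtremallyDisconnected.open_closure U hU⟩,
      subset_closure haU, h⟩
  · exact ⟨b, hb, _, ⟨isClosed_closure, ExtremallyDisconnected.open_closure V hV⟩,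
      subset_closure hbV, h⟩

theorem Set.Infinite.exists_seq_stronglyDiscreteOn {S : Set X} (hS : S.Infinite) :
    ∃ d : ℕ → X, (∀ n, d n ∈ S) ∧ StronglyDiscreteOn d univ := by
  choose a haT K hK haK hinf using fun T : {T : Set X // T.Infinite} =>
    T.2.exists_isClopen_mem_infinite_diff
  let T : ℕ → {T : Set X // T.Infinite} := fun n =>
    Nat.rec ⟨S, hS⟩ (fun _ T => ⟨T.1 \ K T, hinf T⟩) n
  have hT : Antitone fun n => (T n).1 := antitone_nat_of_succ_le fun n => sdiff_subset
  refine ⟨fun n => a (T n), fun n => hT n.zero_le (haT _), disjointed fun n => K (T n),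
    fun n => ?_, disjoint_disjointed _, fun n _ => ?_⟩ <;> rw [disjointed_eq_inter_compl]
  · exact (hK _).isOpen.inter <|
      (finite_Iio n).isOpen_biInter fun m _ => (hK _).isClosed.isOpen_compl
  · exact ⟨haK _, mem_iInter₂.2 fun m hm => (hT (Nat.succ_le_of_lt hm) (haT (T n))).2⟩

theorem Set.Infinite.exists_subset_const_or_stronglyDiscreteOn {A : Set ℕ} (hA : A.Infinite)
    (g : ℕ → X) : ∃ A' ⊆ A, A'.Infinite ∧ ((∃ v, ∀ m ∈ A', g m = v) ∨ StronglyDiscreteOn g A') := by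
  by_cases hfib : ∃ v, (A ∩ g ⁻¹' {v}).Infinite
  · obtain ⟨v, hv⟩ := hfib
    exact ⟨_, inter_subset_left, hv, .inl ⟨v, fun m hm => hm.2⟩⟩
  simp only [not_exists, not_infinite] at hfib
  have himg : (g '' A).Infinite := fun hfin => hA <| (hfin.biUnion fun v _ => hfib v).subset
    fun m hm => mem_biUnion (mem_image_of_mem g hm) ⟨hm, rfl⟩
  obtain ⟨d, hdA, K, hK, hKd, hdK⟩ := himg.exists_seq_stronglyDiscreteOn
  choose m hmA hgm using hdA
  have hm : Injective m := fun n n' h =>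
    hKd.eq <| not_disjoint_iff.2
      ⟨d n, hdK n trivial, by rw [← hgm n, h, hgm n']; exact hdK n' trivial⟩
  refine ⟨range m, range_subset_iff.2 hmA, infinite_range_of_injective hm,
    .inr ⟨fun j => ⋃ n, ⋃ (_ : m n = j), K n, fun j => isOpen_iUnion fun n => isOpen_iUnion
      fun _ => hK n, fun j j' hjj' => ?_, ?_⟩⟩
  · simp only [onFun, disjoint_iUnion_left, disjoint_iUnion_right]
    rintro n rfl n' rfl
    exact hKd (ne_of_apply_ne m hjj')
  · rintro _ ⟨n, rfl⟩
    exact mem_iUnion₂.2 ⟨n, rfl, hgm n ▸ hdK n trivial⟩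

end StronglyDiscrete

theorem exists_strictMono_forall_eventually_mem {Q : ℕ → Set ℕ → Prop}
    (hQ : ∀ k A, A.Infinite → ∃ A' ⊆ A, A'.Infinite ∧ Q k A') :
    ∃ φ : ℕ → ℕ, StrictMono φ ∧ ∀ k, ∃ A, Q k A ∧ ∀ᶠ m in atTop, φ m ∈ A := by
  choose R hRA hRinf hRQ using hQ
  let A : ℕ → {A : Set ℕ // A.Infinite} := fun n =>
    Nat.rec ⟨univ, infinite_univ⟩ (fun k A => ⟨R k A A.2, hRinf k A A.2⟩) n
  have hA : Antitone fun n => (A n).1 := antitone_nat_of_succ_le fun k => hRA k _ _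
  obtain ⟨φ, hφ, hφA⟩ := extraction_forall_of_frequently (P := fun n m => m ∈ (A n).1)
    fun n => Nat.frequently_atTop_iff_infinite.2 (A n).2
  exact ⟨φ, hφ, fun k => ⟨_, hRQ k _ (A k).2,
    eventually_atTop.2 ⟨k + 1, fun m hm => hA hm (hφA m)⟩⟩⟩

def DiscretelyPCompact (p : Filter ℕ) (X : Type*) [TopologicalSpace X] : Prop :=
  ∀ y : ℕ → X, ∀ A ∈ p, StronglyDiscreteOn y A → ∃ l, Tendsto y p (𝓝 l)

theorem DiscretelyPCompact.exists_strictMono_tendsto_pi {X : Type*} [TopologicalSpace X]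
    [T2Space X] [ExtremallyDisconnected X] {p : Filter ℕ} (hpX : DiscretelyPCompact p X)
    (hp : p ≤ atTop) (u : ℕ → ℕ → X) :
    ∃ φ : ℕ → ℕ, StrictMono φ ∧ ∃ l, Tendsto (u ∘ φ) p (𝓝 l) := by
  obtain ⟨φ, hφ, hφA⟩ := exists_strictMono_forall_eventually_mem
    (Q := fun k A => (∃ v, ∀ m ∈ A, u m k = v) ∨ StronglyDiscreteOn (u · k) A)
    fun k A hA => hA.exists_subset_const_or_stronglyDiscreteOn _
  have hlim : ∀ k, ∃ l, Tendsto (fun m => u (φ m) k) p (𝓝 l) := by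
    intro k
    obtain ⟨A, hQ, hA⟩ := hφA k
    rcases hQ with ⟨v, hv⟩ | hD
    · exact ⟨v, tendsto_const_nhds.congr' (mem_of_superset (hp hA) fun m hm => (hv _ hm).symm)⟩
    · exact hpX _ _ (hp hA) (hD.comp hφ.injective)
  choose l hl using hlim
  exact ⟨φ, hφ, l, tendsto_pi_nhds.2 hl⟩

theorem MaximallyHomogeneous.exists_ultrafilter_discretelyPCompact {X : Type*}
    [TopologicalSpace X] [T2Space X] [CompletelyRegularSpace X] [ExtremallyDisconnected X]
    [Infinite X] (hX : MaximallyHomogeneous X) (hcc : CountablyCompact X) :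
    ∃ p : Ultrafilter ℕ, (p : Filter ℕ) ≤ atTop ∧ DiscretelyPCompact p X := by
  obtain ⟨d, -, K, hK, hKd, hdK⟩ := (infinite_univ (α := X)).exists_seq_stronglyDiscreteOn
  have hE : Pairwise (Disjoint on fun k => K (2 * k)) :=
    hKd.comp_of_injective fun a b h => by simpa using h
  have hF : Pairwise (Disjoint on fun k => K (2 * k + 1)) :=
    hKd.comp_of_injective fun a b h => by simpa using h
  have hEF : ∀ k j, Disjoint (K (2 * k)) (K (2 * j + 1)) := fun k j => hKd (by omega)
  obtain ⟨x, hx⟩ := hcc.exists_mapClusterPt fun k => d (2 * k)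
  obtain ⟨p, hp, he⟩ := mapClusterPt_iff_ultrafilter.1 hx
  obtain ⟨x', he'⟩ := hX.exists_tendsto_of_disjoint he (fun _ => hK _) (fun _ => hK _) hE hF hEF
    (.of_forall fun _ => hdK _ trivial) (.of_forall fun _ => hdK _ trivial)
  set P := closure (⋃ k, K (2 * k))
  have hPo : IsOpen P := ExtremallyDisconnected.open_closure _ (isOpen_iUnion fun _ => hK _)
  have hEP : ∀ k, K (2 * k) ⊆ P := fun k =>
    (subset_iUnion (fun k => K (2 * k)) k).trans subset_closure
  have hFP : ∀ k, Disjoint (K (2 * k + 1)) P := fun k =>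
    ((disjoint_iUnion_left.2 fun j => hEF j k).closure_left (hK _)).symm
  refine ⟨p, hp, fun y A hA ⟨D, hD, hDd, hyD⟩ => ?_⟩
  by_cases hyP : ∀ᶠ k in (p : Filter ℕ), y k ∈ P
  · exact hX.exists_tendsto_of_disjoint he' (fun _ => hK _) (fun k => (hD k).inter hPo) hF
      (hDd.mono fun k j h => h.mono inter_subset_left inter_subset_left)
      (fun k j => (hFP k).mono_right inter_subset_right) (.of_forall fun _ => hdK _ trivial)
      (by filter_upwards [hA, hyP] with k hk hkP using ⟨hyD k hk, hkP⟩)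
  · exact hX.exists_tendsto_of_disjoint he (fun _ => hK _) (fun k => (hD k).sdiff isClosed_closure)
      hE (hDd.mono fun k j h => h.mono sdiff_subset sdiff_subset)
      (fun k j => disjoint_sdiff_right.mono_left (hEP k)) (.of_forall fun _ => hdK _ trivial)
      (by filter_upwards [hA, Ultrafilter.eventually_not.2 hyP] with k hk hkP using ⟨hyD k hk, hkP⟩)

/-- The countable power of a countably compact maximally homogeneous extremally
disconnected space is countably compact. -/
theorem stmt_17 {X : Type*} [TopologicalSpace X] [T2Space X] [CompletelyRegularSpace X]
    [ExtremallyDisconnected X] (hX : MaximallyHomogeneous X) (hcc : CountablyCompact X) :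
    CountablyCompact (ℕ → X) := by
  refine countablyCompact_of_forall_exists_mapClusterPt fun u => ?_
  rcases finite_or_infinite X with hfin | hinf
  · exact exists_clusterPt_of_compactSpace _
  obtain ⟨p, hp, hpX⟩ := hX.exists_ultrafilter_discretelyPCompact hcc
  obtain ⟨φ, hφ, l, hl⟩ := hpX.exists_strictMono_tendsto_pi hp u
  exact ⟨l, (hl.mapClusterPt).of_comp (hφ.tendsto_atTop.mono_left hp)⟩
end
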